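/- arXiv:2002.12030 — 6 statements merged into one kernel-verified Lean document; each statement's English description precedes it below -/
import Mathlib

section
/- Let (A,B), (C,D), (E,F) be separations of a graph G such that (A,B) and (C,D) cross. If (E,F) is nested with both (A,B) and (C,D), then (E,F) is nested with every corner separation of (A,B) and (C,D). -/
open Set

universe u

variable {V : Type*}

/-- A separation of a graph `G`: a pair of vertex sets covering `V` with no edge
between `A \ B` and `B \ A`. -/
def IsSep (G : SimpleGraph V) (A B : Set V) : Prop :=
  A ∪ B = Set.univ ∧ ∀ a ∈ A \ B, ∀ b ∈ B \ A, ¬ G.Adj a b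

/-- The order on separations: `(A,B) ≤ (C,D)` iff `A ⊆ C` and `D ⊆ B`. -/
def SepLE (A B C D : Set V) : Prop := A ⊆ C ∧ D ⊆ B

/-- Two separations are nested if one is comparable with the other or its reverse. -/
def Nested (A B C D : Set V) : Prop :=
  SepLE A B C D ∨ SepLE C D A B ∨ SepLE A B D C ∨ SepLE D C A B

/-- A set of separations is consistent. -/
def Consistent (P : Set (Set V × Set V)) : Prop :=
  ∀ A B C D : Set V, (A, B) ∈ P → SepLE C D A B → (D, C) ∉ P

/-- The profile axiom (P2). -/
def P2 (P : Set (Set V × Set V)) : Prop :=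
  ∀ p ∈ P, ∀ q ∈ P, (p.2 ∩ q.2, p.1 ∪ q.1) ∉ P

/-- A profile is principal if every subfamily with equal separators has a common
vertex in the intersection of the big sides minus the small sides. -/
def Principal (P : Set (Set V × Set V)) : Prop :=
  ∀ Q ⊆ P, Q.Nonempty → (∀ p ∈ Q, ∀ q ∈ Q, p.1 ∩ p.2 = q.1 ∩ q.2) →
    (⋂ p ∈ Q, (p.2 \ p.1)).Nonempty

/-- Robustness of a set of separations. -/
def Robust (G : SimpleGraph V) (P : Set (Set V × Set V)) : Prop :=
  ∀ A B : Set V, (A, B) ∈ P → (A ∩ B).Finite →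
    ∀ C D : Set V, IsSep G C D → (C ∩ D).Finite →
      ((B ∩ C) ∩ (A ∪ D)).ncard < (A ∩ B).ncard →
      ((B ∩ D) ∩ (A ∪ C)).ncard < (A ∩ B).ncard →
      ((B ∩ C, A ∪ D) ∉ P ∨ (B ∩ D, A ∪ C) ∉ P)

/-- `C` is a (connected) component of `G - X`. -/
def IsComponent (G : SimpleGraph V) (X C : Set V) : Prop :=
  C.Nonempty ∧ C ⊆ Xᶜ ∧ (G.induce C).Connected ∧
    ∀ D : Set V, C ⊆ D → D ⊆ Xᶜ → (G.induce D).Connected → D = C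

/-- The neighbourhood of a vertex set. -/
def setNbhd (G : SimpleGraph V) (C : Set V) : Set V :=
  {v | v ∉ C ∧ ∃ c ∈ C, G.Adj v c}

/-- A separation `(A,B)` distinguishes two profiles. -/
def Distinguishes (A B : Set V) (P P' : Set (Set V × Set V)) : Prop :=
  ((A, B) ∈ P ∧ (B, A) ∈ P') ∨ ((A, B) ∈ P' ∧ (B, A) ∈ P)

/-- A tree-decomposition of `G` modelled on a tree `T`. -/
structure TreeDecomp (G : SimpleGraph V) {τ : Type*} (T : SimpleGraph τ) where
  bag : τ → Set V
  isTree : T.IsTree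
  covers : ∀ v : V, ∃ t, v ∈ bag t
  coversEdges : ∀ u v : V, G.Adj u v → ∃ t, u ∈ bag t ∧ v ∈ bag t
  pathInter : ∀ t₁ t₂ t₃ : τ, ∀ p : T.Walk t₁ t₃, p.IsPath → t₂ ∈ p.support →
    bag t₁ ∩ bag t₃ ⊆ bag t₂

/-- The union of the bags on the side of `s` of the edge `ss'` of the decomposition tree. -/
def sideSet {G : SimpleGraph V} {τ : Type*} {T : SimpleGraph τ} (td : TreeDecomp G T)
    (s s' : τ) : Set V :=
  ⋃ t ∈ {t | (T.deleteEdges {s(s, s')}).Reachable s t}, td.bag t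

/-- The torso of the part `bag t`, as a graph on `V` whose edges live inside `bag t`. -/
def torso (G : SimpleGraph V) {τ : Type*} (T : SimpleGraph τ) (td : TreeDecomp G T)
    (t : τ) : SimpleGraph V where
  Adj x y := x ≠ y ∧ x ∈ td.bag t ∧ y ∈ td.bag t ∧
    (G.Adj x y ∨ ∃ t', T.Adj t t' ∧ x ∈ td.bag t' ∧ y ∈ td.bag t')
  symm := by
    constructor
    rintro x y ⟨h1, h2, h3, h4⟩
    refine ⟨h1.symm, h3, h2, ?_⟩
    rcases h4 with h | ⟨t', ht, hx, hy⟩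
    · exact Or.inl h.symm
    · exact Or.inr ⟨t', ht, hy, hx⟩
  loopless := by constructor; rintro x ⟨h1, -⟩; exact h1 rfl

/-- The profile induced by an end of `G`: all separations of finite order such that the
component of the complement of the separator in which the end lives is contained in the
big side. -/
def endProfile (G : SimpleGraph V) (e : ↥G.end) : Set (Set V × Set V) :=
  {p | IsSep G p.1 p.2 ∧ ∃ hf : (p.1 ∩ p.2).Finite,
    ((e.val (Opposite.op hf.toFinset)).supp ⊆ p.2)}

/-!
Nestedness says that an orientation of `(E,F)` lies below an orientation of the other
separation. If `(E,F)` lay below an orientation of `(A,B)` while `(F,E)` lay below one of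
`(C,D)`, then `(A,B)` and `(C,D)` would be nested through `(E,F)`. So a single orientation of
`(E,F)` lies below an orientation `(P,Q)` of `(A,B)` and `(R,S)` of `(C,D)`: hence below the
corner `(P ∩ R, Q ∪ S)` and below the inverses of the three other corners.
-/

section Corners

variable {A B C D E F : Set V}

theorem SepLE.swap (h : SepLE A B C D) : SepLE D C B A := h.symm

theorem Nested.swap_left (h : Nested A B C D) : Nested B A C D := by
  unfold Nested SepLE at *
  tauto

theorem Nested.swap_right (h : Nested A B C D) : Nested A B D C := by
  unfold Nested at *
  tauto

theorem nested_of_sepLE_of_sepLE_swap (h : SepLE E F A B) (h' : SepLE F E C D) :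
    Nested A B C D :=
  Or.inr (Or.inr (Or.inr ⟨h'.2.trans h.1, h.2.trans h'.1⟩))

def NestedWithCorners (E F A B C D : Set V) : Prop :=
  Nested E F (A ∩ C) (B ∪ D) ∧ Nested E F (A ∩ D) (B ∪ C) ∧
    Nested E F (B ∩ C) (A ∪ D) ∧ Nested E F (B ∩ D) (A ∪ C)

namespace NestedWithCorners

theorem swap (h : NestedWithCorners E F A B C D) : NestedWithCorners F E A B C D :=
  ⟨h.1.swap_left, h.2.1.swap_left, h.2.2.1.swap_left, h.2.2.2.swap_left⟩

theorem swap_corner_left (h : NestedWithCorners E F A B C D) :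
    NestedWithCorners E F B A C D :=
  ⟨h.2.2.1, h.2.2.2, h.1, h.2.1⟩

theorem swap_corner_right (h : NestedWithCorners E F A B C D) :
    NestedWithCorners E F A B D C :=
  ⟨h.2.1, h.1, h.2.2.2, h.2.2.1⟩

theorem of_sepLE_of_sepLE (hA : SepLE E F A B) (hC : SepLE E F C D) :
    NestedWithCorners E F A B C D :=
  ⟨Or.inl ⟨subset_inter hA.1 hC.1, union_subset hA.2 hC.2⟩,
    Or.inr (Or.inr (Or.inl ⟨hC.1.trans subset_union_right, inter_subset_right.trans hC.2⟩)),
    Or.inr (Or.inr (Or.inl ⟨hA.1.trans subset_union_left, inter_subset_left.trans hA.2⟩)),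
    Or.inr (Or.inr (Or.inl ⟨hA.1.trans subset_union_left, inter_subset_left.trans hA.2⟩))⟩

theorem of_sepLE_of_nested (hcross : ¬ Nested A B C D) (hA : SepLE E F A B)
    (hC : Nested E F C D) : NestedWithCorners E F A B C D := by
  rcases hC with h | h | h | h
  · exact of_sepLE_of_sepLE hA h
  · exact absurd (nested_of_sepLE_of_sepLE_swap hA h.swap).swap_right hcross
  · exact (of_sepLE_of_sepLE hA h).swap_corner_right
  · exact absurd (nested_of_sepLE_of_sepLE_swap hA h.swap) hcross

end NestedWithCorners

end Corners

theorem nested_with_all_corners_general (A B C D E F : Set V)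
    (hcross : ¬ Nested A B C D)
    (h1 : Nested E F A B) (h2 : Nested E F C D) :
    Nested E F (A ∩ C) (B ∪ D) ∧ Nested E F (A ∩ D) (B ∪ C) ∧
    Nested E F (B ∩ C) (A ∪ D) ∧ Nested E F (B ∩ D) (A ∪ C) := by
  have hcross' : ¬ Nested B A C D := fun h => hcross h.swap_left
  rcases h1 with h | h | h | h
  · exact NestedWithCorners.of_sepLE_of_nested hcross h h2
  · exact (NestedWithCorners.of_sepLE_of_nested hcross' h.swap h2.swap_left).swap.swap_corner_left
  · exact (NestedWithCorners.of_sepLE_of_nested hcross' h h2).swap_corner_left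
  · exact (NestedWithCorners.of_sepLE_of_nested hcross h.swap h2.swap_left).swap

/-- if `(E,F)` is nested with two crossing separations `(A,B)` and `(C,D)`,
then it is nested with every corner separation of them. -/
theorem nested_with_all_corners (G : SimpleGraph V) (A B C D E F : Set V)
    (hAB : IsSep G A B) (hCD : IsSep G C D) (hEF : IsSep G E F)
    (hcross : ¬ Nested A B C D)
    (h1 : Nested E F A B) (h2 : Nested E F C D) :
    Nested E F (A ∩ C) (B ∪ D) ∧ Nested E F (A ∩ D) (B ∪ C) ∧
    Nested E F (B ∩ C) (A ∪ D) ∧ Nested E F (B ∩ D) (A ∪ C) :=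
  nested_with_all_corners_general A B C D E F hcross h1 h2
end

section
/- Let (A,B) and (C,D) be two crossing separations of a graph G, let S be a set of separations of G, and let (X₁,Y₁) and (X₂,Y₂) be two opposite corner separations of (A,B) and (C,D). Then (i) every separation in S crossing both (X₁,Y₁) and (X₂,Y₂) crosses both (A,B) and (C,D); and (ii) the set of separations in S crossing (X₁,Y₁) or (X₂,Y₂) is a proper subset of the set of separations in S ∪ {(A,B),(C,D)} crossing (A,B) or (C,D), provided (A,B) ∈ S. In particular, if all these sets are finite, then c_S(X₁,Y₁) + c_S(X₂,Y₂) < c_S(A,B) + c_S(C,D), where c_S denotes the number of separations in S crossing the given separation. -/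
/-!
Separations form a poset with an order-reversing involution `(A,B) ↦ (B,A)`, and the corner
`(A ∩ C, B ∪ D)` is the meet of `(A,B)` and `(C,D)`. Hence a separation nested with `(A,B)`
lies above `(A,B)` (and so above the corner) or below it (and so above the opposite corner, after
reversal). A separation nested with both `(A,B)` and `(C,D)` is nested with both corners: the only
case not settled by transitivity or by the meet property would make `(A,B)` and `(C,D)` nested.
So a separation crossing a corner crosses `(A,B)` or `(C,D)`, one crossing both corners crosses
both, while `(A,B)` crosses `(C,D)` but is nested with both corners; inclusion–exclusion then
gives the count.
-/

open Set

universe u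

variable {V : Type*}

/-- The set of separations in `S` crossing `(A,B)`. -/
def CrossSet (S : Set (Set V × Set V)) (A B : Set V) : Set (Set V × Set V) :=
  {p ∈ S | ¬ Nested A B p.1 p.2}

theorem Set.ncard_add_ncard_lt_of_inter_subset_of_union_ssubset {α : Type*}
    {P₁ P₂ Q₁ Q₂ : Set α} (hinter : P₁ ∩ P₂ ⊆ Q₁ ∩ Q₂) (hunion : P₁ ∪ P₂ ⊂ Q₁ ∪ Q₂)
    (hQ₁ : Q₁.Finite) (hQ₂ : Q₂.Finite) :
    P₁.ncard + P₂.ncard < Q₁.ncard + Q₂.ncard := by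
  have hQ : (Q₁ ∪ Q₂).Finite := hQ₁.union hQ₂
  have hP₁ : P₁.Finite := hQ.subset (subset_union_left.trans hunion.subset)
  have hP₂ : P₂.Finite := hQ.subset (subset_union_right.trans hunion.subset)
  have hP := ncard_union_add_ncard_inter P₁ P₂ hP₁ hP₂
  have hQ' := ncard_union_add_ncard_inter Q₁ Q₂ hQ₁ hQ₂
  have hlt := ncard_lt_ncard hunion hQ
  have hle := ncard_le_ncard hinter (hQ₁.inter_of_left Q₂)
  omega

variable {A B C D E F : Set V} {S T : Set (Set V × Set V)}

namespace SepLE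

theorem trans (h₁ : SepLE A B C D) (h₂ : SepLE C D E F) : SepLE A B E F :=
  ⟨h₁.1.trans h₂.1, h₂.2.trans h₁.2⟩

theorem swap_s5 (h : SepLE A B C D) : SepLE D C B A :=
  ⟨h.2, h.1⟩

theorem le_corner (h₁ : SepLE E F A B) (h₂ : SepLE E F C D) : SepLE E F (A ∩ C) (B ∪ D) :=
  ⟨subset_inter h₁.1 h₂.1, union_subset h₁.2 h₂.2⟩

end SepLE

theorem sepLE_corner_left : SepLE (A ∩ C) (B ∪ D) A B :=
  ⟨inter_subset_left, subset_union_left⟩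

theorem sepLE_corner_right : SepLE (A ∩ C) (B ∪ D) C D :=
  ⟨inter_subset_right, subset_union_right⟩

theorem nested_comm : Nested A B C D ↔ Nested C D A B := by
  unfold Nested SepLE; tauto

theorem nested_swap_left : Nested B A C D ↔ Nested A B C D := by
  unfold Nested SepLE; tauto

theorem nested_swap_right : Nested A B D C ↔ Nested A B C D := by
  unfold Nested SepLE; tauto

namespace Nested

theorem corner_or_opposite (h : Nested A B E F) :
    Nested (A ∩ C) (B ∪ D) E F ∨ Nested (B ∩ D) (A ∪ C) E F := by
  rcases h with h | h | h | h
  · exact .inl (.inl (sepLE_corner_left.trans h))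
  · exact .inr (.inr (.inr (.inl (sepLE_corner_left.trans h.swap_s5))))
  · exact .inl (.inr (.inr (.inl (sepLE_corner_left.trans h))))
  · exact .inr (.inl (sepLE_corner_left.trans h.swap_s5))

theorem corner_of_not_nested (hcross : ¬ Nested A B C D) (h₁ : Nested A B E F)
    (h₂ : Nested C D E F) : Nested (A ∩ C) (B ∪ D) E F := by
  rcases h₁ with h₁ | h₁ | h₁ | h₁
  · exact .inl (sepLE_corner_left.trans h₁)
  · rcases h₂ with h₂ | h₂ | h₂ | h₂
    · exact .inl (sepLE_corner_right.trans h₂)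
    · exact .inr (.inl (h₁.le_corner h₂))
    · exact .inr (.inr (.inl (sepLE_corner_right.trans h₂)))
    · exact absurd (.inr (.inr (.inr (h₁.swap_s5.trans h₂).swap_s5))) hcross
  · exact .inr (.inr (.inl (sepLE_corner_left.trans h₁)))
  · rcases h₂ with h₂ | h₂ | h₂ | h₂
    · exact .inl (sepLE_corner_right.trans h₂)
    · exact absurd (.inr (.inr (.inr (h₁.swap_s5.trans h₂).swap_s5))) hcross
    · exact .inr (.inr (.inl (sepLE_corner_right.trans h₂)))
    · exact .inr (.inr (.inr (h₁.le_corner h₂)))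

end Nested

theorem mem_crossSet {p : Set V × Set V} :
    p ∈ CrossSet S A B ↔ p ∈ S ∧ ¬ Nested A B p.1 p.2 :=
  Iff.rfl

theorem crossSet_swap (S : Set (Set V × Set V)) (A B : Set V) :
    CrossSet S B A = CrossSet S A B := by
  ext p; simp only [mem_crossSet, nested_swap_left]

theorem crossSet_mono (h : S ⊆ T) : CrossSet S A B ⊆ CrossSet T A B :=
  fun _ hp => ⟨h hp.1, hp.2⟩

theorem crossSet_corner_inter_subset :
    CrossSet S (A ∩ C) (B ∪ D) ∩ CrossSet S (B ∩ D) (A ∪ C) ⊆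
      CrossSet S A B ∩ CrossSet S C D := by
  rintro p ⟨⟨hpS, hp₁⟩, -, hp₂⟩
  refine ⟨⟨hpS, fun h => ?_⟩, hpS, fun h => ?_⟩
  · exact (h.corner_or_opposite (C := C) (D := D)).elim hp₁ hp₂
  · have h' := h.corner_or_opposite (C := A) (D := B)
    rw [inter_comm C A, union_comm D B, inter_comm D B, union_comm C A] at h'
    exact h'.elim hp₁ hp₂

theorem crossSet_corner_union_subset (hcross : ¬ Nested A B C D) :
    CrossSet S (A ∩ C) (B ∪ D) ∪ CrossSet S (B ∩ D) (A ∪ C) ⊆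
      CrossSet S A B ∪ CrossSet S C D := by
  have hcross' : ¬ Nested B A D C := by rwa [nested_swap_left, nested_swap_right]
  rintro p (⟨hpS, hp⟩ | ⟨hpS, hp⟩) <;> by_contra hnot <;>
    obtain ⟨hAB, hCD⟩ : Nested A B p.1 p.2 ∧ Nested C D p.1 p.2 := by
      simpa [mem_crossSet, hpS] using hnot
  · exact hp (hAB.corner_of_not_nested hcross hCD)
  · exact hp ((nested_swap_left.mpr hAB).corner_of_not_nested hcross'
      (nested_swap_left.mpr hCD))

theorem crossSet_corner_union_ssubset (hAB : (A, B) ∈ S) (hcross : ¬ Nested A B C D) :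
    CrossSet S (A ∩ C) (B ∪ D) ∪ CrossSet S (B ∩ D) (A ∪ C) ⊂
      CrossSet S A B ∪ CrossSet S C D := by
  refine (ssubset_iff_of_subset (crossSet_corner_union_subset hcross)).mpr
    ⟨(A, B), .inr ⟨hAB, fun h => hcross (nested_comm.mpr h)⟩, ?_⟩
  rintro (⟨-, h⟩ | ⟨-, h⟩)
  · exact h (.inl sepLE_corner_left)
  · exact h (.inr (.inr (.inl sepLE_corner_left)))

theorem corner_crossing_general (A B C D : Set V)
    (hcross : ¬ Nested A B C D)
    (S : Set (Set V × Set V))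
    (X₁ Y₁ X₂ Y₂ : Set V)
    (hopp : ((X₁, Y₁) = (A ∩ C, B ∪ D) ∧ (X₂, Y₂) = (B ∩ D, A ∪ C)) ∨
            ((X₁, Y₁) = (A ∩ D, B ∪ C) ∧ (X₂, Y₂) = (B ∩ C, A ∪ D))) :
    (CrossSet S X₁ Y₁ ∩ CrossSet S X₂ Y₂ ⊆ CrossSet S A B ∩ CrossSet S C D) ∧
    ((A, B) ∈ S → CrossSet S X₁ Y₁ ∪ CrossSet S X₂ Y₂ ⊂
      CrossSet (S ∪ {(A, B), (C, D)}) A B ∪ CrossSet (S ∪ {(A, B), (C, D)}) C D) ∧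
    ((A, B) ∈ S → (CrossSet S A B).Finite → (CrossSet S C D).Finite →
      (CrossSet S X₁ Y₁).ncard + (CrossSet S X₂ Y₂).ncard
        < (CrossSet S A B).ncard + (CrossSet S C D).ncard) := by
  obtain ⟨hinter, hunion⟩ :
      CrossSet S X₁ Y₁ ∩ CrossSet S X₂ Y₂ ⊆ CrossSet S A B ∩ CrossSet S C D ∧
      ((A, B) ∈ S → CrossSet S X₁ Y₁ ∪ CrossSet S X₂ Y₂ ⊂
        CrossSet S A B ∪ CrossSet S C D) := by
    rcases hopp with ⟨h₁, h₂⟩ | ⟨h₁, h₂⟩ <;>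
      obtain ⟨rfl, rfl⟩ := Prod.mk.inj h₁ <;> obtain ⟨rfl, rfl⟩ := Prod.mk.inj h₂
    · exact ⟨crossSet_corner_inter_subset, fun h => crossSet_corner_union_ssubset h hcross⟩
    -- the second pair of opposite corners is the first pair for `(A,B)` and `(D,C)`
    · rw [← crossSet_swap S C D]
      exact ⟨crossSet_corner_inter_subset,
        fun h => crossSet_corner_union_ssubset h (by rwa [nested_swap_right])⟩
  refine ⟨hinter, fun hAB => ?_, fun hAB hfin₁ hfin₂ => ?_⟩
  · exact (hunion hAB).trans_subset (union_subset_union (crossSet_mono subset_union_left)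
      (crossSet_mono subset_union_left))
  · exact ncard_add_ncard_lt_of_inter_subset_of_union_ssubset hinter (hunion hAB) hfin₁ hfin₂

/-- corner separations cross fewer separations than the crossing
separations they come from. -/
theorem corner_crossing (G : SimpleGraph V) (A B C D : Set V)
    (hAB : IsSep G A B) (hCD : IsSep G C D) (hcross : ¬ Nested A B C D)
    (S : Set (Set V × Set V)) (hS : ∀ p ∈ S, IsSep G p.1 p.2)
    (X₁ Y₁ X₂ Y₂ : Set V)
    (hopp : ((X₁, Y₁) = (A ∩ C, B ∪ D) ∧ (X₂, Y₂) = (B ∩ D, A ∪ C)) ∨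
            ((X₁, Y₁) = (A ∩ D, B ∪ C) ∧ (X₂, Y₂) = (B ∩ C, A ∪ D))) :
    (CrossSet S X₁ Y₁ ∩ CrossSet S X₂ Y₂ ⊆ CrossSet S A B ∩ CrossSet S C D) ∧
    ((A, B) ∈ S → CrossSet S X₁ Y₁ ∪ CrossSet S X₂ Y₂ ⊂
      CrossSet (S ∪ {(A, B), (C, D)}) A B ∪ CrossSet (S ∪ {(A, B), (C, D)}) C D) ∧
    ((A, B) ∈ S → (CrossSet S A B).Finite → (CrossSet S C D).Finite →
      (CrossSet S X₁ Y₁).ncard + (CrossSet S X₂ Y₂).ncard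
        < (CrossSet S A B).ncard + (CrossSet S C D).ncard) :=
  corner_crossing_general A B C D hcross S X₁ Y₁ X₂ Y₂ hopp
end

section
/- For every end ω of a graph G, the set P_ω of all separations (A,B) of finite order such that ω lies in a component of G−(A∩B) contained in B, is a robust principal profile of G. -/
open Set

universe u

variable {V : Type*}

/-!
If `(A, B)` lies in the profile of an end `e` and `S ⊇ A ∩ B` is finite, the component of `e`
outside `S` lies in `B \ A`. Taking for `S` the union of finitely many separators shows that
the interiors `B \ A` of finitely many members share a vertex; consistency, (P2) and
robustness are set-theoretic consequences of this, and principality is the case of a single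
common separator.
-/

def BigSidesFiniteInter (P : Set (Set V × Set V)) : Prop :=
  ∀ Q ⊆ P, Q.Finite → (⋂ p ∈ Q, p.2 \ p.1).Nonempty

section BigSidesFiniteInter

variable {P : Set (Set V × Set V)}

lemma BigSidesFiniteInter.exists_mem_three (hP : BigSidesFiniteInter P) {p q r : Set V × Set V}
    (hp : p ∈ P) (hq : q ∈ P) (hr : r ∈ P) :
    ∃ x, x ∈ p.2 \ p.1 ∧ x ∈ q.2 \ q.1 ∧ x ∈ r.2 \ r.1 := by
  obtain ⟨x, hx⟩ := hP {p, q, r} (by simp [insert_subset_iff, hp, hq, hr])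
    (toFinite {p, q, r})
  simp only [mem_insert_iff, mem_singleton_iff, iInter_iInter_eq_or_left,
    iInter_iInter_eq_left, mem_inter_iff] at hx
  exact ⟨x, hx.1, hx.2.1, hx.2.2⟩

lemma BigSidesFiniteInter.consistent (hP : BigSidesFiniteInter P) : Consistent P := by
  rintro A B C D hAB ⟨hCA, -⟩ hDC
  obtain ⟨x, ⟨-, hxA⟩, ⟨hxC, -⟩, -⟩ := hP.exists_mem_three hAB hDC hDC
  exact hxA (hCA hxC)

lemma BigSidesFiniteInter.p2 (hP : BigSidesFiniteInter P) : P2 P := by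
  rintro p hp q hq hpq
  obtain ⟨x, ⟨hxp, -⟩, ⟨hxq, -⟩, -, hx⟩ := hP.exists_mem_three hp hq hpq
  exact hx ⟨hxp, hxq⟩

/-- Within `B \ A` the interiors of the two corners are `D \ C` and `C \ D`. -/
lemma BigSidesFiniteInter.robust (hP : BigSidesFiniteInter P) (G : SimpleGraph V) :
    Robust G P := by
  intro A B hAB _ C D _ _ _ _
  by_contra! hcorners
  obtain ⟨x, ⟨hxB, hxA⟩, ⟨-, hxBC⟩, ⟨hxAC, -⟩⟩ :=
    hP.exists_mem_three hAB hcorners.1 hcorners.2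
  have hxC : x ∈ C := hxAC.resolve_left hxA
  exact hxBC ⟨hxB, hxC⟩

end BigSidesFiniteInter

section endProfile

variable (G : SimpleGraph V) (e : ↥G.end)

lemma end_supp_antitone {K L : Finset V} (h : K ⊆ L) :
    (e.val (Opposite.op L)).supp ⊆ (e.val (Opposite.op K)).supp := by
  rw [← e.prop (CategoryTheory.homOfLE h).op, SimpleGraph.componentComplFunctor_map]
  exact SimpleGraph.ComponentCompl.subset_hom _ (by simpa using h)

variable {G e}

lemma endProfile_supp_subset_diff {A B : Set V} (h : (A, B) ∈ endProfile G e) {L : Finset V}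
    (hL : A ∩ B ⊆ L) : (e.val (Opposite.op L)).supp ⊆ B \ A := by
  obtain ⟨-, _, hsupp⟩ := h
  intro x hx
  have hxB : x ∈ B := hsupp (end_supp_antitone G e (by simpa using hL) hx)
  exact ⟨hxB, fun hxA => SimpleGraph.ComponentCompl.notMem_of_mem hx (hL ⟨hxA, hxB⟩)⟩

variable (G e)

lemma endProfile_bigSidesFiniteInter : BigSidesFiniteInter (endProfile G e) := by
  intro Q hQ hQfin
  have hL : (⋃ p ∈ Q, p.1 ∩ p.2).Finite := hQfin.biUnion fun p hp => (hQ hp).2.1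
  obtain ⟨x, hx⟩ := (e.val (Opposite.op hL.toFinset)).nonempty
  refine ⟨x, mem_iInter₂.2 fun p hp => endProfile_supp_subset_diff (hQ hp) ?_ hx⟩
  rw [Finite.coe_toFinset]
  exact subset_biUnion_of_mem (u := fun p : Set V × Set V => p.1 ∩ p.2) hp

lemma endProfile_principal : Principal (endProfile G e) := by
  rintro Q hQ ⟨p₀, hp₀⟩ hsep
  obtain ⟨-, hf, -⟩ := hQ hp₀
  obtain ⟨x, hx⟩ := (e.val (Opposite.op hf.toFinset)).nonempty
  refine ⟨x, mem_iInter₂.2 fun p hp => endProfile_supp_subset_diff (hQ hp) ?_ hx⟩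
  rw [Finite.coe_toFinset, hsep p hp p₀ hp₀]

end endProfile

/-- for every end `e` of `G`, the induced set of separations `endProfile G e`
is a robust principal profile. -/
theorem endProfile_is_robust_principal_profile (G : SimpleGraph V) (e : ↥G.end) :
    (∀ p ∈ endProfile G e, IsSep G p.1 p.2 ∧ (p.1 ∩ p.2).Finite) ∧
    Consistent (endProfile G e) ∧ P2 (endProfile G e) ∧
    Principal (endProfile G e) ∧ Robust G (endProfile G e) := by
  have hFI := endProfile_bigSidesFiniteInter G e
  exact ⟨fun p ⟨hsep, hf, _⟩ => ⟨hsep, hf⟩, hFI.consistent, hFI.p2,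
    endProfile_principal G e, hFI.robust G⟩
end

section
/- Let G be a well-separable graph with respect to a set P of principal k-profiles, let P₁,P₂ ∈ P, and let (A,B) be a separation of minimal order κ(P,G) distinguishing P₁ and P₂ efficiently. Then there is a component X of G[A∖B] such that the separation (X ∪ N(X), V(G)∖X) also distinguishes P₁ and P₂ efficiently. -/
open Set

universe u

variable {V : Type*}

/-! The principal profile `P₂ ∋ (B, A)` has a vertex `v` strictly inside the big side of each
of its separations with separator `S = A ∩ B`; in particular `v ∈ A ∖ B`. Let `X` be the
component of `G - S` containing `v`. Well-separability forces `N(X) = S`, so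
`(X ∪ N(X), V ∖ X)` has order `|S|` as well. `P₂` cannot orient it towards `X`, which contains
`v`, while `P₁` must, by consistency, since this separation lies below `(A, B)`. -/

lemma isSep_union_setNbhd_compl (G : SimpleGraph V) (C : Set V) :
    IsSep G (C ∪ setNbhd G C) Cᶜ := by
  refine ⟨union_assoc C _ _ ▸ eq_univ_of_univ_subset fun x _ => ?_, ?_⟩
  · by_cases hx : x ∈ C
    · exact Or.inl hx
    · exact Or.inr (Or.inr hx)
  · rintro a ⟨-, haC⟩ b ⟨hbC, hbN⟩ hab
    exact hbN (Or.inr ⟨hbC, a, not_not.mp haC, hab.symm⟩)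

lemma union_setNbhd_inter_compl (G : SimpleGraph V) (C : Set V) :
    (C ∪ setNbhd G C) ∩ Cᶜ = setNbhd G C := by
  rw [union_inter_distrib_right, inter_compl_self, empty_union]
  exact inter_eq_left.mpr fun _ hx => hx.1

lemma IsSep.subset_sdiff_of_connected {G : SimpleGraph V} {A B C : Set V}
    (hAB : IsSep G A B) (hC : (G.induce C).Connected) (hCS : C ⊆ (A ∩ B)ᶜ) {v : V} (hv : v ∈ C)
    (hvA : v ∈ A \ B) : C ⊆ A \ B := by
  intro c hc
  by_contra hcA
  obtain ⟨p⟩ := hC.preconnected ⟨v, hv⟩ ⟨c, hc⟩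
  obtain ⟨d, -, hd₁, hd₂⟩ := p.exists_boundary_dart {x | x.1 ∈ A \ B} hvA hcA
  have hd_snd : d.snd.1 ∈ B \ A := by
    have hcov : d.snd.1 ∈ A ∪ B := hAB.1 ▸ mem_univ _
    have hnA : d.snd.1 ∉ A := fun h => hd₂ ⟨h, fun hB => hCS d.snd.2 ⟨h, hB⟩⟩
    exact ⟨hcov.resolve_left hnA, hnA⟩
  exact hAB.2 _ hd₁ _ hd_snd d.adj

lemma exists_isComponent_mem (G : SimpleGraph V) (S : Set V) {v : V} (hv : v ∉ S) :
    ∃ C, IsComponent G S C ∧ v ∈ C ∧ setNbhd G C ⊆ S := by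
  set C := ⋃₀ {D : Set V | v ∈ D ∧ D ⊆ Sᶜ ∧ (G.induce D).Connected}
  have hsingleton (w : V) : (G.induce {w}).Connected := by simp
  have hvC : v ∈ C := ⟨{v}, ⟨rfl, singleton_subset_iff.mpr hv, hsingleton v⟩, rfl⟩
  have hCS : C ⊆ Sᶜ := sUnion_subset fun D hD => hD.2.1
  have hconn : (G.induce C).Connected :=
    G.induce_sUnion_connected_of_pairwise_not_disjoint ⟨{v}, rfl, singleton_subset_iff.mpr hv,
      hsingleton v⟩ (fun hD hD' => ⟨v, hD.1, hD'.1⟩) fun hD => hD.2.2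
  have hmax : ∀ D, v ∈ D → D ⊆ Sᶜ → (G.induce D).Connected → D ⊆ C :=
    fun D hvD hDS hD => subset_sUnion_of_mem ⟨hvD, hDS, hD⟩
  refine ⟨C, ⟨⟨v, hvC⟩, hCS, hconn,
    fun D hCD hDS hD => (hmax D (hCD hvC) hDS hD).antisymm hCD⟩, hvC, ?_⟩
  rintro a ⟨haC, c, hcC, hac⟩
  by_contra haS
  have hconn' : (G.induce (C ∪ {a})).Connected :=
    G.connected_induce_union hconn.preconnected (hsingleton a).preconnected hcC rfl hac.symm
  exact haC (hmax _ (Or.inl hvC) (union_subset hCS (singleton_subset_iff.mpr haS)) hconn'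
    (Or.inr rfl))

lemma Principal.exists_forall_mem_sdiff {P : Set (Set V × Set V)} (hP : Principal P)
    {S : Set V} (hS : ∃ p ∈ P, p.1 ∩ p.2 = S) : ∃ v, ∀ p ∈ P, p.1 ∩ p.2 = S → v ∈ p.2 \ p.1 := by
  obtain ⟨p, hp, hpS⟩ := hS
  obtain ⟨v, hv⟩ := hP {q ∈ P | q.1 ∩ q.2 = S} (fun _ hq => hq.1) ⟨p, hp, hpS⟩
    fun q hq q' hq' => hq.2.trans hq'.2.symm
  exact ⟨v, fun q hq hqS => mem_iInter₂.mp hv q ⟨hq, hqS⟩⟩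

theorem exists_isComponent_sep_mem {G : SimpleGraph V} {Pa Pb : Set (Set V × Set V)} {k : ℕ}
    {A B : Set V} (hAB : IsSep G A B) (hABf : (A ∩ B).Finite) (hk : (A ∩ B).ncard < k)
    (hPa : Consistent Pa)
    (hPa_total : ∀ C D : Set V, IsSep G C D → (C ∩ D).Finite → (C ∩ D).ncard < k →
      (C, D) ∈ Pa ∨ (D, C) ∈ Pa)
    (hPb : Principal Pb)
    (hPb_total : ∀ C D : Set V, IsSep G C D → (C ∩ D).Finite → (C ∩ D).ncard < k →
      (C, D) ∈ Pb ∨ (D, C) ∈ Pb)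
    (hab : (A, B) ∈ Pa) (hba : (B, A) ∈ Pb)
    (hws : ∀ C : Set V, IsComponent G (A ∩ B) C → ¬ setNbhd G C ⊂ A ∩ B) :
    ∃ X, IsComponent G (A ∩ B) X ∧ X ⊆ A \ B ∧ setNbhd G X = A ∩ B ∧
      (X ∪ setNbhd G X, Xᶜ) ∈ Pa ∧ (Xᶜ, X ∪ setNbhd G X) ∈ Pb := by
  obtain ⟨v, hv⟩ := hPb.exists_forall_mem_sdiff ⟨(B, A), hba, inter_comm B A⟩
  have hvAB : v ∈ A \ B := hv (B, A) hba (inter_comm B A)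
  obtain ⟨X, hX, hvX, hXN⟩ := exists_isComponent_mem G (A ∩ B) fun h => hvAB.2 h.2
  have hXAB : X ⊆ A \ B := hAB.subset_sdiff_of_connected hX.2.2.1 hX.2.1 hvX hvAB
  have hN : setNbhd G X = A ∩ B := hXN.eq_or_ssubset.resolve_right (hws X hX)
  have hsep := isSep_union_setNbhd_compl G X
  have horder : (X ∪ setNbhd G X) ∩ Xᶜ = A ∩ B := (union_setNbhd_inter_compl G X).trans hN
  have hfin : ((X ∪ setNbhd G X) ∩ Xᶜ).Finite := horder ▸ hABf
  have hsmall : ((X ∪ setNbhd G X) ∩ Xᶜ).ncard < k := horder ▸ hk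
  have hle : SepLE (X ∪ setNbhd G X) Xᶜ A B :=
    ⟨union_subset (hXAB.trans sdiff_subset) (hN ▸ inter_subset_left),
      fun b hb hbX => (hXAB hbX).2 hb⟩
  refine ⟨X, hX, hXAB, hN, ?_, ?_⟩
  · exact (hPa_total _ _ hsep hfin hsmall).resolve_right (hPa A B _ _ hab hle)
  · exact (hPb_total _ _ hsep hfin hsmall).resolve_left fun h => (hv _ h horder).1 hvX

theorem component_separation_efficient_general (G : SimpleGraph V)
    (Ps : Set (Set (Set V × Set V))) (k m : ℕ)
    (hprof : ∀ P ∈ Ps, Consistent P ∧ P2 P ∧ Principal P ∧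
      (∀ p ∈ P, IsSep G p.1 p.2 ∧ (p.1 ∩ p.2).Finite ∧ (p.1 ∩ p.2).ncard < k) ∧
      (∀ A B : Set V, IsSep G A B → (A ∩ B).Finite → (A ∩ B).ncard < k →
        (A, B) ∈ P ∨ (B, A) ∈ P))
    (hws : ∀ A B : Set V, IsSep G A B → (A ∩ B).Finite → (A ∩ B).ncard = m →
      ∀ C : Set V, IsComponent G (A ∩ B) C → ¬ setNbhd G C ⊂ A ∩ B)
    (P₁ P₂ : Set (Set V × Set V)) (h1 : P₁ ∈ Ps) (h2 : P₂ ∈ Ps)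
    (A B : Set V) (hAB : IsSep G A B) (hABf : (A ∩ B).Finite)
    (hABord : (A ∩ B).ncard = m) (hd : Distinguishes A B P₁ P₂) :
    ∃ X : Set V, IsComponent G (A ∩ B) X ∧ X ⊆ A \ B ∧
      IsSep G (X ∪ setNbhd G X) Xᶜ ∧
      Distinguishes (X ∪ setNbhd G X) Xᶜ P₁ P₂ ∧
      ((X ∪ setNbhd G X) ∩ Xᶜ).ncard = m := by
  have key : ∀ {Pa Pb}, Pa ∈ Ps → Pb ∈ Ps → (A, B) ∈ Pa → (B, A) ∈ Pb →
      ∃ X, IsComponent G (A ∩ B) X ∧ X ⊆ A \ B ∧ setNbhd G X = A ∩ B ∧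
        (X ∪ setNbhd G X, Xᶜ) ∈ Pa ∧ (Xᶜ, X ∪ setNbhd G X) ∈ Pb := by
    intro Pa Pb ha hb hab hba
    obtain ⟨hPa, -, -, hPa_small, hPa_total⟩ := hprof Pa ha
    obtain ⟨-, -, hPb, -, hPb_total⟩ := hprof Pb hb
    exact exists_isComponent_sep_mem hAB hABf (hPa_small _ hab).2.2 hPa hPa_total hPb hPb_total
      hab hba (hws A B hAB hABf hABord)
  obtain ⟨X, hX, hXAB, hN, hdist⟩ : ∃ X, IsComponent G (A ∩ B) X ∧ X ⊆ A \ B ∧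
      setNbhd G X = A ∩ B ∧ Distinguishes (X ∪ setNbhd G X) Xᶜ P₁ P₂ := by
    rcases hd with ⟨h12, h21⟩ | ⟨h12, h21⟩
    · obtain ⟨X, hX, hXAB, hN, hdist⟩ := key h1 h2 h12 h21
      exact ⟨X, hX, hXAB, hN, Or.inl hdist⟩
    · obtain ⟨X, hX, hXAB, hN, hdist⟩ := key h2 h1 h12 h21
      exact ⟨X, hX, hXAB, hN, Or.inr hdist⟩
  exact ⟨X, hX, hXAB, isSep_union_setNbhd_compl G X, hdist,
    by rw [union_setNbhd_inter_compl, hN, hABord]⟩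

/-- in a well-separable graph, an efficient separation distinguishing two
principal `k`-profiles can be replaced by a component separation `(X ∪ N(X), V ∖ X)`
with `X` a component of `A ∖ B`, which also distinguishes them efficiently. -/
theorem component_separation_efficient (G : SimpleGraph V)
    (Ps : Set (Set (Set V × Set V))) (k m : ℕ)
    (hprof : ∀ P ∈ Ps, Consistent P ∧ P2 P ∧ Principal P ∧
      (∀ p ∈ P, IsSep G p.1 p.2 ∧ (p.1 ∩ p.2).Finite ∧ (p.1 ∩ p.2).ncard < k) ∧
      (∀ A B : Set V, IsSep G A B → (A ∩ B).Finite → (A ∩ B).ncard < k →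
        (A, B) ∈ P ∨ (B, A) ∈ P))
    (hκ : ∀ A B : Set V, IsSep G A B → (A ∩ B).Finite →
      (∃ P ∈ Ps, ∃ P' ∈ Ps, Distinguishes A B P P') → m ≤ (A ∩ B).ncard)
    (hws : ∀ A B : Set V, IsSep G A B → (A ∩ B).Finite → (A ∩ B).ncard = m →
      ∀ C : Set V, IsComponent G (A ∩ B) C → ¬ setNbhd G C ⊂ A ∩ B)
    (P₁ P₂ : Set (Set V × Set V)) (h1 : P₁ ∈ Ps) (h2 : P₂ ∈ Ps)
    (A B : Set V) (hAB : IsSep G A B) (hABf : (A ∩ B).Finite)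
    (hABord : (A ∩ B).ncard = m) (hd : Distinguishes A B P₁ P₂) :
    ∃ X : Set V, IsComponent G (A ∩ B) X ∧ X ⊆ A \ B ∧
      IsSep G (X ∪ setNbhd G X) Xᶜ ∧
      Distinguishes (X ∪ setNbhd G X) Xᶜ P₁ P₂ ∧
      ((X ∪ setNbhd G X) ∩ Xᶜ).ncard = m :=
  component_separation_efficient_general G Ps k m hprof hws P₁ P₂ h1 h2 A B hAB hABf hABord hd
end

section
/- Let N be a nested set of separations of a graph G satisfying the finiteness property (*) and define the relation ∼ on N by (A,B) ∼ (C,D) iff (A,B) = (C,D) or (B,A) is a predecessor of (C,D) in the partial order (N, ≤). Then ∼ is an equivalence relation on N. -/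
open Set

universe u

variable {V : Type*}

/-- Strict order on separations. -/
def SepLT (p q : Set V × Set V) : Prop := SepLE p.1 p.2 q.1 q.2 ∧ p ≠ q

/-- `p` is a predecessor of `q` in `(N, ≤)`. -/
def IsPred (N : Set (Set V × Set V)) (p q : Set V × Set V) : Prop :=
  p ∈ N ∧ q ∈ N ∧ SepLT p q ∧ ∀ r ∈ N, ¬ (SepLT p r ∧ SepLT r q)

/-! Only transitivity needs an argument. Write `s*` for the reverse of `s`; if `p* ⋖ q` and
`q* ⋖ r`, then also `q* < p` and `r* < q`. Of the four ways in which `p` and `r` can be nested,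
`p ≤ r` and `r ≤ p` force `p = r` (otherwise `p` lies strictly between `q*` and `r`, or `r*`
strictly between `p*` and `q`), while `p ≤ r*` gives `q* ≤ q`, impossible for a separation of `N`.
In the remaining case `p* ≤ r`, and `p* ⋖ r` because an element strictly between `p*` and `r` is
nested with `q`, which again puts it strictly between the ends of a covering pair or makes some
separation of `N` small. -/

namespace SeparationSystem

variable {α : Type*} [PartialOrder α] {rev : α → α}

lemma rev_lt_rev (hinv : Function.Involutive rev) (hanti : Antitone rev) {a b : α}
    (h : a < b) : rev b < rev a :=
  hanti.strictAnti_of_injective hinv.injective h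

lemma rev_le_comm (hinv : Function.Involutive rev) (hanti : Antitone rev) {a b : α} :
    rev a ≤ b ↔ rev b ≤ a :=
  ⟨fun h => hinv a ▸ hanti h, fun h => hinv b ▸ hanti h⟩

lemma rev_lt_comm (hinv : Function.Involutive rev) (hanti : Antitone rev) {a b : α} :
    rev a < b ↔ rev b < a :=
  ⟨fun h => hinv a ▸ rev_lt_rev hinv hanti h, fun h => hinv b ▸ rev_lt_rev hinv hanti h⟩

lemma rev_covBy_rev (hinv : Function.Involutive rev) (hanti : Antitone rev) {a b : α}
    (h : a ⋖ b) : rev b ⋖ rev a :=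
  ⟨rev_lt_rev hinv hanti h.lt, fun _ hbc hca =>
    h.2 (hinv a ▸ rev_lt_rev hinv hanti hca) ((rev_lt_comm hinv hanti).1 hbc)⟩

lemma rev_covBy_comm (hinv : Function.Involutive rev) (hanti : Antitone rev) {a b : α} :
    rev a ⋖ b ↔ rev b ⋖ a :=
  ⟨fun h => hinv a ▸ rev_covBy_rev hinv hanti h, fun h => hinv b ▸ rev_covBy_rev hinv hanti h⟩

lemma not_rev_le_self (hinv : Function.Involutive rev) (hsmall : ∀ a, ¬ a ≤ rev a) (a : α) :
    ¬ rev a ≤ a := by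
  simpa only [hinv a] using hsmall (rev a)

lemma rev_covBy_of_rev_le (hinv : Function.Involutive rev) (hanti : Antitone rev)
    (hnested : ∀ a b, a ≤ b ∨ b ≤ a ∨ a ≤ rev b ∨ rev b ≤ a) (hsmall : ∀ a, ¬ a ≤ rev a)
    {p q r : α} (hpq : rev p ⋖ q) (hqr : rev q ⋖ r) (hpr : rev p ≤ r) : rev p ⋖ r := by
  have hqp : rev q < p := (rev_lt_comm hinv hanti).1 hpq.lt
  have hrq : rev r < q := (rev_lt_comm hinv hanti).1 hqr.lt
  have hsmall' := not_rev_le_self hinv hsmall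
  refine ⟨hpr.lt_of_ne ?_, fun x hpx hxr => ?_⟩
  · rintro rfl
    exact hsmall' q (hqr.le.trans hpq.le)
  rcases hnested x q with hxq | hqx | hxq | hqx
  · rcases hxq.lt_or_eq with hxq | rfl
    · exact hpq.2 hpx hxq
    · exact hsmall' r (hrq.trans hxr).le
  · exact hsmall' r (hrq.le.trans (hqx.trans hxr.le))
  · exact hsmall' p (hpx.le.trans (hxq.trans hqp.le))
  · rcases hqx.lt_or_eq with hqx | rfl
    · exact hqr.2 hqx hxr
    · exact hsmall' p (hpx.trans hqp).le

lemma eq_or_rev_covBy_trans (hinv : Function.Involutive rev) (hanti : Antitone rev)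
    (hnested : ∀ a b, a ≤ b ∨ b ≤ a ∨ a ≤ rev b ∨ rev b ≤ a) (hsmall : ∀ a, ¬ a ≤ rev a)
    {p q r : α} (hpq : rev p ⋖ q) (hqr : rev q ⋖ r) : p = r ∨ rev p ⋖ r := by
  have hqp : rev q < p := (rev_lt_comm hinv hanti).1 hpq.lt
  have hrq : rev r < q := (rev_lt_comm hinv hanti).1 hqr.lt
  rcases hnested p r with hpr | hrp | hpr | hrp
  · exact hpr.eq_or_lt.imp_right fun hpr => (hqr.2 hqp hpr).elim
  · exact hrp.eq_or_lt.imp Eq.symm fun hrp => (hpq.2 (rev_lt_rev hinv hanti hrp) hrq).elim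
  · exact (not_rev_le_self hinv hsmall q (hqp.le.trans (hpr.trans hrq.le))).elim
  · exact Or.inr (rev_covBy_of_rev_le hinv hanti hnested hsmall hpq hqr
      ((rev_le_comm hinv hanti).1 hrp))

theorem equivalence_eq_or_rev_covBy (hinv : Function.Involutive rev) (hanti : Antitone rev)
    (hnested : ∀ a b, a ≤ b ∨ b ≤ a ∨ a ≤ rev b ∨ rev b ≤ a) (hsmall : ∀ a, ¬ a ≤ rev a) :
    Equivalence (fun p q : α => p = q ∨ rev p ⋖ q) where
  refl _ := Or.inl rfl
  symm := Or.imp Eq.symm (rev_covBy_comm hinv hanti).1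
  trans := by
    rintro p q r (rfl | hpq) (rfl | hqr)
    · exact Or.inl rfl
    · exact Or.inr hqr
    · exact Or.inr hpq
    · exact eq_or_rev_covBy_trans hinv hanti hnested hsmall hpq hqr

end SeparationSystem

theorem tilde_equivalence_general (N : Set (Set V × Set V))
    (hnested : ∀ p ∈ N, ∀ q ∈ N, Nested p.1 p.2 q.1 q.2)
    (hrev : ∀ p ∈ N, (p.2, p.1) ∈ N)
    (hproper : ∀ p ∈ N, ¬ SepLE p.1 p.2 p.2 p.1) :
    Equivalence (fun p q : ↥N =>
      p.val = q.val ∨ IsPred N (p.val.2, p.val.1) q.val) := by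
  -- the product order of `Set V × (Set V)ᵒᵈ` is the order of separations
  let M : Set (Set V × (Set V)ᵒᵈ) := N
  let rev (p : M) : M := ⟨(p.val.2, p.val.1), hrev p.1 p.2⟩
  have hinv : Function.Involutive rev := fun _ => rfl
  have hanti : Antitone rev := fun _ _ h => ⟨h.2, h.1⟩
  have hlt (p q : M) : SepLT p.val q.val ↔ p < q := by
    rw [lt_iff_le_and_ne, Ne, Subtype.ext_iff]; rfl
  have hpred (p q : M) : IsPred N (p.val.2, p.val.1) q.val ↔ rev p ⋖ q := by
    constructor
    · rintro ⟨-, -, hpq, hmax⟩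
      exact ⟨(hlt (rev p) q).1 hpq,
        fun r hpr hrq => hmax r.1 r.2 ⟨(hlt (rev p) r).2 hpr, (hlt r q).2 hrq⟩⟩
    · rintro ⟨hpq, hmax⟩
      exact ⟨(rev p).2, q.2, (hlt (rev p) q).2 hpq,
        fun r hr h => hmax (c := ⟨r, hr⟩) ((hlt (rev p) _).1 h.1) ((hlt _ q).1 h.2)⟩
  have key := SeparationSystem.equivalence_eq_or_rev_covBy hinv hanti
    (fun p q => hnested p.1 p.2 q.1 q.2) (fun p => hproper p.1 p.2)
  simp only [Subtype.ext_iff, ← hpred] at key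
  exact key

/-- the relation `∼` on a nested set `N` of separations satisfying (*),
closed under reversal and containing no small separations, is an equivalence relation. -/
theorem tilde_equivalence (G : SimpleGraph V) (N : Set (Set V × Set V))
    (hsep : ∀ p ∈ N, IsSep G p.1 p.2)
    (hnested : ∀ p ∈ N, ∀ q ∈ N, Nested p.1 p.2 q.1 q.2)
    (hstar : ∀ p ∈ N, ∀ q ∈ N, {r ∈ N | SepLT p r ∧ SepLT r q}.Finite)
    (hrev : ∀ p ∈ N, (p.2, p.1) ∈ N)
    (hproper : ∀ p ∈ N, ¬ SepLE p.1 p.2 p.2 p.1) :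
    Equivalence (fun p q : ↥N =>
      p.val = q.val ∨ IsPred N (p.val.2, p.val.1) q.val) :=
  tilde_equivalence_general N hnested hrev hproper
end

section
/- Let (T,𝒱) be a tree-decomposition of a graph G, let t ∈ V(T), let H be the torso of V_t, and let (A,B) be a separation of G that does not separate any adhesion set contained in V_t. Then (A ∩ V_t, B ∩ V_t) is a separation of the torso H, provided that all separations induced by edges of T are proper and that for every adhesion set S of (T,𝒱) and every component C of G−S we have N(C) = S. -/
open Set

universe u

variable {V : Type*}

theorem IsSep.inter_union_inter {G : SimpleGraph V} {A B : Set V} (hAB : IsSep G A B)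
    (X : Set V) : A ∩ X ∪ B ∩ X = X := by
  rw [← union_inter_distrib_right, hAB.1, univ_inter]

theorem separation_induces_torso_separation_general {τ : Type*} (G : SimpleGraph V)
    (T : SimpleGraph τ) (td : TreeDecomp G T) (t : τ)
    (A B : Set V) (hAB : IsSep G A B)
    (hns : ∀ t' : τ, T.Adj t t' →
      ¬ (((td.bag t ∩ td.bag t') ∩ (A \ B)).Nonempty ∧
         ((td.bag t ∩ td.bag t') ∩ (B \ A)).Nonempty)) :
    (A ∩ td.bag t) ∪ (B ∩ td.bag t) = td.bag t ∧
    ∀ a ∈ (A ∩ td.bag t) \ (B ∩ td.bag t), ∀ b ∈ (B ∩ td.bag t) \ (A ∩ td.bag t),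
      ¬ (torso G T td t).Adj a b := by
  refine ⟨hAB.inter_union_inter _, ?_⟩
  rintro a ⟨⟨haA, hat⟩, haB⟩ b ⟨⟨hbB, hbt⟩, hbA⟩ ⟨-, -, -, hadj⟩
  have haB' : a ∉ B := fun h ↦ haB ⟨h, hat⟩
  have hbA' : b ∉ A := fun h ↦ hbA ⟨h, hbt⟩
  rcases hadj with hG | ⟨t', htt', hat', hbt'⟩
  · exact hAB.2 a ⟨haA, haB'⟩ b ⟨hbB, hbA'⟩ hG
  · exact hns t' htt' ⟨⟨a, ⟨hat, hat'⟩, haA, haB'⟩, ⟨b, ⟨hbt, hbt'⟩, hbB, hbA'⟩⟩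

/-- a separation of `G` not separating any adhesion set at `t` induces a
separation of the torso of `V_t`, provided induced separations are proper and every
component of the complement of an adhesion set has the full adhesion set as
neighbourhood. -/
theorem separation_induces_torso_separation {τ : Type*} (G : SimpleGraph V)
    (T : SimpleGraph τ) (td : TreeDecomp G T) (t : τ)
    (hproper : ∀ s s' : τ, T.Adj s s' →
      (sideSet td s s' \ sideSet td s' s).Nonempty ∧
      (sideSet td s' s \ sideSet td s s').Nonempty)
    (hadh : ∀ s s' : τ, T.Adj s s' → ∀ C : Set V,
      IsComponent G (td.bag s ∩ td.bag s') C → setNbhd G C = td.bag s ∩ td.bag s')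
    (A B : Set V) (hAB : IsSep G A B)
    (hns : ∀ t' : τ, T.Adj t t' →
      ¬ (((td.bag t ∩ td.bag t') ∩ (A \ B)).Nonempty ∧
         ((td.bag t ∩ td.bag t') ∩ (B \ A)).Nonempty)) :
    (A ∩ td.bag t) ∪ (B ∩ td.bag t) = td.bag t ∧
    ∀ a ∈ (A ∩ td.bag t) \ (B ∩ td.bag t), ∀ b ∈ (B ∩ td.bag t) \ (A ∩ td.bag t),
      ¬ (torso G T td t).Adj a b :=
  separation_induces_torso_separation_general G T td t A B hAB hns
end
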